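/- arXiv:2112.08225 — 3 statements merged into one kernel-verified Lean document; each statement's English description precedes it below -/
import Mathlib

section
/- (Equality case of generalized Young's inequality) Let γ be a class K∞ function with class K∞ derivative γ'. For nonzero x, y ∈ ℝⁿ, ⟨x, y⟩ = γ(‖x‖) + ℓγ(‖y‖) if and only if y = γ'(‖x‖)·x/‖x‖. -/
open Set intervalIntegral
open scoped RealInnerProductSpace
open MeasureTheory

/-! Write `a = ‖x‖`. Cauchy–Schwarz gives `⟪x, y⟫ ≤ a ‖y‖`, with equality iff `y` is a nonnegative
multiple of `x`, and Young's inequality gives `a c ≤ γ a + ∫₀^c γ'⁻¹` for `c ≥ 0`, with equality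
iff `c = γ' a`, because the difference is `∫_{γ' a}^c (γ'⁻¹ u - a) du`. That this difference
vanishes at `c = γ' a` is the statement that the defect `γ t + ∫₀^{γ' t} γ'⁻¹ - t γ' t` vanishes.
Since `γ'` and `γ'⁻¹` are monotone, the defect moves by at most `(t - s) (γ' t - γ' s)` between
`s ≤ t`; telescoping over a partition of `[0, a]` into `n` pieces bounds it by `a γ' a / n`. -/

theorem MonotoneOn.mul_le_intervalIntegral {g : ℝ → ℝ} {p q : ℝ}
    (hg : MonotoneOn g (Icc p q)) (hpq : p ≤ q) : (q - p) * g p ≤ ∫ u in p..q, g u := by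
  simpa using integral_mono_on (μ := volume) hpq intervalIntegrable_const
    (uIcc_of_le hpq ▸ hg).intervalIntegrable fun u hu => hg (left_mem_Icc.2 hpq) hu hu.1

theorem MonotoneOn.intervalIntegral_le_mul {g : ℝ → ℝ} {p q : ℝ}
    (hg : MonotoneOn g (Icc p q)) (hpq : p ≤ q) : ∫ u in p..q, g u ≤ (q - p) * g q := by
  simpa using integral_mono_on (μ := volume) hpq (uIcc_of_le hpq ▸ hg).intervalIntegrable
    intervalIntegrable_const fun u hu => hg hu (right_mem_Icc.2 hpq) hu.2

theorem StrictMonoOn.intervalIntegral_sub_pos {g : ℝ → ℝ} {p q : ℝ}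
    (hg : StrictMonoOn g (uIcc p q)) (hpq : p ≠ q) : 0 < ∫ u in p..q, (g u - g p) := by
  have hint : IntervalIntegrable g volume p q := hg.monotoneOn.intervalIntegrable
  rcases hpq.lt_or_gt with hlt | hgt
  · rw [uIcc_of_le hlt.le] at hg
    refine intervalIntegral_pos_of_pos_on (hint.sub intervalIntegrable_const) (fun u hu => ?_) hlt
    exact sub_pos.2 (hg (left_mem_Icc.2 hlt.le) (Ioo_subset_Icc_self hu) hu.1)
  · rw [uIcc_of_ge hgt.le] at hg
    rw [integral_symm, ← intervalIntegral.integral_neg]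
    refine intervalIntegral_pos_of_pos_on (hint.symm.sub intervalIntegrable_const).neg
      (fun u hu => ?_) hgt
    exact neg_pos.2 (sub_neg.2 (hg (Ioo_subset_Icc_self hu) (right_mem_Icc.2 hgt.le) hu.2))

theorem eq_of_abs_sub_le_mul_sub {f g : ℝ → ℝ} {p q : ℝ} (hpq : p ≤ q)
    (h : ∀ s t, p ≤ s → s ≤ t → t ≤ q → |f t - f s| ≤ (t - s) * (g t - g s)) : f q = f p := by
  have hbound : ∀ n : ℕ, 0 < n → |f q - f p| ≤ (q - p) * (g q - g p) / n := by
    intro n hn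
    set d := (q - p) / n with hd
    set x : ℕ → ℝ := fun i => p + i * d with hx
    have hd0 : 0 ≤ d := div_nonneg (sub_nonneg.2 hpq) n.cast_nonneg
    have hxmono : Monotone x := fun i j hij => by
      simp only [hx]; gcongr
    have hx0 : x 0 = p := by simp [hx]
    have hxn : x n = q := by simp only [hx, hd]; field_simp; ring
    have hstep : ∀ i ∈ Finset.range n,
        |f (x (i + 1)) - f (x i)| ≤ d * (g (x (i + 1)) - g (x i)) := by
      intro i hi
      have hsucc : x (i + 1) - x i = d := by simp only [hx]; push_cast; ring
      rw [← hsucc]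
      exact h _ _ (hx0 ▸ hxmono (Nat.zero_le i)) (hxmono (Nat.le_succ i))
        (hxn ▸ hxmono (Finset.mem_range.1 hi))
    calc |f q - f p| = |∑ i ∈ Finset.range n, (f (x (i + 1)) - f (x i))| := by
          rw [Finset.sum_range_sub (fun i => f (x i)), hxn, hx0]
      _ ≤ ∑ i ∈ Finset.range n, d * (g (x (i + 1)) - g (x i)) :=
          (Finset.abs_sum_le_sum_abs _ _).trans (Finset.sum_le_sum hstep)
      _ = (q - p) * (g q - g p) / n := by
          rw [← Finset.mul_sum, Finset.sum_range_sub (fun i => g (x i)), hxn, hx0, hd]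
          ring
  refine eq_of_abs_sub_eq_zero (le_antisymm ?_ (abs_nonneg _))
  exact ge_of_tendsto (tendsto_const_div_atTop_nhds_zero_nat _)
    (Filter.eventually_atTop.2 ⟨1, fun n hn => hbound n hn⟩)

theorem Function.strictMonoOn_of_rightInvOn_of_mapsTo {α β : Type*} [PartialOrder α]
    [LinearOrder β] {φ : β → α} {ψ : α → β} {t : Set β} {s : Set α} (hφ : MonotoneOn φ t)
    (φψs : RightInvOn ψ φ s) (ψts : MapsTo ψ s t) : StrictMonoOn ψ s :=
  (monotoneOn_of_rightInvOn_of_mapsTo hφ φψs ψts).strictMonoOn_of_injOn φψs.injOn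

theorem eq_div_norm_smul_iff {F : Type*} [NormedAddCommGroup F] [InnerProductSpace ℝ F]
    {x y : F} {c : ℝ} (hx : x ≠ 0) (hc : 0 ≤ c) :
    y = (c / ‖x‖) • x ↔ ‖y‖ = c ∧ ⟪x, y⟫ = ‖x‖ * ‖y‖ := by
  have hx' : ‖x‖ ≠ 0 := norm_ne_zero_iff.2 hx
  constructor
  · rintro rfl
    rw [norm_smul, real_inner_smul_right, real_inner_self_eq_norm_sq, Real.norm_eq_abs,
      abs_of_nonneg (div_nonneg hc (norm_nonneg x))]
    constructor <;> field_simp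
  · rintro ⟨rfl, h⟩
    rw [div_eq_inv_mul, mul_smul, inner_eq_norm_mul_iff_real.1 h, inv_smul_smul₀ hx']

section Young

variable {γ γ' γinv : ℝ → ℝ}

noncomputable def youngDefect (γ γ' γinv : ℝ → ℝ) (t : ℝ) : ℝ :=
  γ t + (∫ u in (0 : ℝ)..γ' t, γinv u) - t * γ' t

theorem intervalIntegrable_of_monotoneOn_Ici {g : ℝ → ℝ} (hg : MonotoneOn g (Ici 0)) {c d : ℝ}
    (hc : 0 ≤ c) (hd : 0 ≤ d) : IntervalIntegrable g volume c d :=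
  (hg.mono fun _ hu => (le_min hc hd).trans hu.1).intervalIntegrable

theorem abs_youngDefect_sub_le (hderiv : ∀ x ∈ Ici (0 : ℝ), HasDerivAt γ (γ' x) x)
    (hmono : StrictMonoOn γ' (Ici 0)) (hmaps : MapsTo γinv (Ici 0) (Ici 0))
    (hright : RightInvOn γinv γ' (Ici 0)) (hleft : LeftInvOn γinv γ' (Ici 0))
    (hγ'0 : γ' 0 = 0) {s t : ℝ} (hs : 0 ≤ s) (hst : s ≤ t) :
    |youngDefect γ γ' γinv t - youngDefect γ γ' γinv s| ≤ (t - s) * (γ' t - γ' s) := by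
  have ht : 0 ≤ t := hs.trans hst
  have hγ's : 0 ≤ γ' s := hγ'0 ▸ hmono.monotoneOn self_mem_Ici hs hs
  have hγ'st : γ' s ≤ γ' t := hmono.monotoneOn hs ht hst
  have hinv : MonotoneOn γinv (Ici 0) :=
    Function.monotoneOn_of_rightInvOn_of_mapsTo hmono.monotoneOn hright hmaps
  have hγ'Icc : MonotoneOn γ' (Icc s t) := hmono.monotoneOn.mono fun _ hu => hs.trans hu.1
  have hinvIcc : MonotoneOn γinv (Icc (γ' s) (γ' t)) := hinv.mono fun _ hu => hγ's.trans hu.1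
  have hFTC : γ t - γ s = ∫ u in s..t, γ' u :=
    (integral_eq_sub_of_hasDerivAt (fun u hu => hderiv u (hs.trans (uIcc_of_le hst ▸ hu).1))
      (uIcc_of_le hst ▸ hγ'Icc).intervalIntegrable).symm
  have hsplit : (∫ u in (0 : ℝ)..γ' t, γinv u)
      = (∫ u in (0 : ℝ)..γ' s, γinv u) + ∫ u in γ' s..γ' t, γinv u :=
    (integral_add_adjacent_intervals (intervalIntegrable_of_monotoneOn_Ici hinv le_rfl hγ's)
      (intervalIntegrable_of_monotoneOn_Ici hinv hγ's (hγ's.trans hγ'st))).symm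
  have h1 := hγ'Icc.mul_le_intervalIntegral hst
  have h2 := hγ'Icc.intervalIntegral_le_mul hst
  have h3 := hinvIcc.mul_le_intervalIntegral hγ'st
  have h4 := hinvIcc.intervalIntegral_le_mul hγ'st
  rw [hleft hs] at h3
  rw [hleft ht] at h4
  rw [youngDefect, youngDefect, abs_le]
  constructor <;> linarith

theorem youngDefect_eq_zero (hderiv : ∀ x ∈ Ici (0 : ℝ), HasDerivAt γ (γ' x) x)
    (hmono : StrictMonoOn γ' (Ici 0)) (hmaps : MapsTo γinv (Ici 0) (Ici 0))
    (hright : RightInvOn γinv γ' (Ici 0)) (hleft : LeftInvOn γinv γ' (Ici 0))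
    (hγ0 : γ 0 = 0) (hγ'0 : γ' 0 = 0) {a : ℝ} (ha : 0 ≤ a) : youngDefect γ γ' γinv a = 0 := by
  have h := eq_of_abs_sub_le_mul_sub ha fun s t hs hst _ =>
    abs_youngDefect_sub_le hderiv hmono hmaps hright hleft hγ'0 hs hst
  simpa [youngDefect, hγ0, hγ'0] using h

theorem mul_lt_add_integral_of_ne (hderiv : ∀ x ∈ Ici (0 : ℝ), HasDerivAt γ (γ' x) x)
    (hmono : StrictMonoOn γ' (Ici 0)) (hmaps : MapsTo γinv (Ici 0) (Ici 0))
    (hright : RightInvOn γinv γ' (Ici 0)) (hleft : LeftInvOn γinv γ' (Ici 0))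
    (hγ0 : γ 0 = 0) (hγ'0 : γ' 0 = 0) {a c : ℝ} (ha : 0 ≤ a) (hc : 0 ≤ c) (hne : c ≠ γ' a) :
    a * c < γ a + ∫ u in (0 : ℝ)..c, γinv u := by
  have hγ'a : 0 ≤ γ' a := hγ'0 ▸ hmono.monotoneOn self_mem_Ici ha ha
  have hinv := Function.strictMonoOn_of_rightInvOn_of_mapsTo hmono.monotoneOn hright hmaps
  have hint := intervalIntegrable_of_monotoneOn_Ici hinv.monotoneOn hγ'a hc
  have hsplit : (∫ u in (0 : ℝ)..c, γinv u)
      = (∫ u in (0 : ℝ)..γ' a, γinv u) + ∫ u in γ' a..c, γinv u :=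
    (integral_add_adjacent_intervals
      (intervalIntegrable_of_monotoneOn_Ici hinv.monotoneOn le_rfl hγ'a) hint).symm
  have hgap := (hinv.mono fun _ hu => (le_min hγ'a hc).trans hu.1).intervalIntegral_sub_pos
    hne.symm
  rw [hleft ha, intervalIntegral.integral_sub hint intervalIntegrable_const,
    intervalIntegral.integral_const, smul_eq_mul] at hgap
  have hdefect := youngDefect_eq_zero hderiv hmono hmaps hright hleft hγ0 hγ'0 ha
  rw [youngDefect] at hdefect
  linarith

end Young

theorem generalized_young_eq_iff_general (n : ℕ) (γ γ' γinv : ℝ → ℝ)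
    (hderiv : ∀ x ∈ Ici (0:ℝ), HasDerivAt γ (γ' x) x)
    (hγ0 : γ 0 = 0)
    (hγ'0 : γ' 0 = 0) (hγ'mono : StrictMonoOn γ' (Ici 0))
    (hinv_nonneg : ∀ r ∈ Ici (0:ℝ), γinv r ∈ Ici (0:ℝ))
    (hinv_right : ∀ r ∈ Ici (0:ℝ), γ' (γinv r) = r)
    (hinv_left : ∀ r ∈ Ici (0:ℝ), γinv (γ' r) = r)
    (x y : EuclideanSpace ℝ (Fin n)) (hx : x ≠ 0) :
    ⟪x, y⟫ = γ ‖x‖ + (∫ s in (0:ℝ)..‖y‖, γinv s) ↔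
      y = (γ' ‖x‖ / ‖x‖) • x := by
  have hγ'x : 0 ≤ γ' ‖x‖ := hγ'0 ▸ hγ'mono.monotoneOn self_mem_Ici (norm_nonneg x) (norm_nonneg x)
  have hdefect := youngDefect_eq_zero hderiv hγ'mono hinv_nonneg hinv_right hinv_left hγ0 hγ'0
    (norm_nonneg x)
  rw [youngDefect, sub_eq_zero] at hdefect
  rw [eq_div_norm_smul_iff hx hγ'x]
  constructor
  · intro h
    have hnorm : ‖y‖ = γ' ‖x‖ := by
      by_contra hne
      have := mul_lt_add_integral_of_ne hderiv hγ'mono hinv_nonneg hinv_right hinv_left hγ0 hγ'0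
        (norm_nonneg x) (norm_nonneg y) hne
      linarith [real_inner_le_norm x y]
    exact ⟨hnorm, by rw [h, hnorm, hdefect]⟩
  · rintro ⟨hnorm, hinner⟩
    rw [hinner, hnorm, hdefect]

/-- Equality case of generalized Young's inequality: for nonzero
`x, y ∈ ℝⁿ`, `⟨x, y⟩ = γ ‖x‖ + ℓγ ‖y‖` iff `y = γ'(‖x‖) • x / ‖x‖`. -/
theorem generalized_young_eq_iff (n : ℕ) (γ γ' γinv : ℝ → ℝ)
    (hderiv : ∀ x ∈ Ici (0:ℝ), HasDerivAt γ (γ' x) x)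
    (hγ0 : γ 0 = 0) (hγmono : StrictMonoOn γ (Ici 0))
    (hγcont : ContinuousOn γ (Ici 0))
    (hγunb : ∀ M : ℝ, ∃ r ∈ Ici (0:ℝ), γ r > M)
    (hγ'0 : γ' 0 = 0) (hγ'mono : StrictMonoOn γ' (Ici 0))
    (hγ'cont : ContinuousOn γ' (Ici 0))
    (hγ'unb : ∀ M : ℝ, ∃ r ∈ Ici (0:ℝ), γ' r > M)
    (hinv_nonneg : ∀ r ∈ Ici (0:ℝ), γinv r ∈ Ici (0:ℝ))
    (hinv_right : ∀ r ∈ Ici (0:ℝ), γ' (γinv r) = r)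
    (hinv_left : ∀ r ∈ Ici (0:ℝ), γinv (γ' r) = r)
    (x y : EuclideanSpace ℝ (Fin n)) (hx : x ≠ 0) (hy : y ≠ 0) :
    ⟪x, y⟫ = γ ‖x‖ + (∫ s in (0:ℝ)..‖y‖, γinv s) ↔
      y = (γ' ‖x‖ / ‖x‖) • x :=
  generalized_young_eq_iff_general n γ γ' γinv hderiv hγ0 hγ'0 hγ'mono hinv_nonneg hinv_right
    hinv_left x y hx
end

section
/- (DSSf differential inequality for the QP filter) Let h : ℝⁿ → ℝ be C¹, f, g₁, g₂ locally Lipschitz vector/matrix fields, u₀ : ℝⁿ → ℝ^{m₂}, ρ a class K function, α an extended class K function, and define ω(x) = ⟨∇h, f + g₂u₀⟩ − ‖g₁ᵀ∇h‖·ρ⁻¹(max{0, −h(x)}) + α(h(x)). Assume ⟨∇h, g₂(x)⟩ = 0 implies ω(x) ≥ 0. Define the QP filter ū(x) = 0 if ω(x) ≥ 0 and ū(x) = −(ω(x)/‖g₂ᵀ∇h‖²)·g₂ᵀ∇h otherwise. Then for every x and every d ∈ ℝ^{m₁}, ⟨∇h(x), f + g₁d + g₂(u₀ + ū)⟩ ≥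 −α(h(x)) + ‖g₁ᵀ∇h‖·(ρ⁻¹(max{0, −h(x)}) − ‖d‖). -/
/-! The controlled Lie derivative splits as `ω - α(h) + ‖b₁‖ ρ⁻¹(max 0 (-h))` plus the disturbance
term `⟪b₁, d⟫ ≥ -‖b₁‖ ‖d‖` plus the filter term `⟪b₂, ū⟫`. The filter is the minimum-norm correction
making `ω + ⟪b₂, ū⟫ = max ω 0` nonnegative; the DSSf-CBF condition rules out `b₂ = 0` when `ω < 0`. -/

open Set
open scoped RealInnerProductSpace

section QPFilter

variable {F : Type*} [NormedAddCommGroup F] [InnerProductSpace ℝ F]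

/-- The closed-form solution of `min ‖u‖²` subject to `ω + ⟪b, u⟫ ≥ 0`. -/
noncomputable def qpFilter (ω : ℝ) (b : F) : F :=
  if 0 ≤ ω then 0 else (-(ω / ‖b‖ ^ 2)) • b

theorem add_inner_qpFilter {ω : ℝ} {b : F} (hb : b = 0 → 0 ≤ ω) :
    ω + ⟪b, qpFilter ω b⟫ = max ω 0 := by
  by_cases hω : 0 ≤ ω
  · simp [qpFilter, hω]
  · have hb : ‖b‖ ≠ 0 := norm_ne_zero_iff.mpr (mt hb hω)
    simp only [qpFilter, if_neg hω, inner_smul_right, real_inner_self_eq_norm_sq]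
    rw [max_eq_right (le_of_not_ge hω)]
    field_simp
    ring

end QPFilter

theorem inner_add_apply_add_apply {E F₁ F₂ : Type*}
    [NormedAddCommGroup E] [InnerProductSpace ℝ E] [CompleteSpace E]
    [NormedAddCommGroup F₁] [InnerProductSpace ℝ F₁] [CompleteSpace F₁]
    [NormedAddCommGroup F₂] [InnerProductSpace ℝ F₂] [CompleteSpace F₂]
    (v w : E) (g₁ : F₁ →L[ℝ] E) (g₂ : F₂ →L[ℝ] E) (d : F₁) (u₀ u : F₂) :
    ⟪v, w + g₁ d + g₂ (u₀ + u)⟫ =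
      ⟪v, w + g₂ u₀⟫ + ⟪ContinuousLinearMap.adjoint g₁ v, d⟫ +
        ⟪ContinuousLinearMap.adjoint g₂ v, u⟫ := by
  simp only [ContinuousLinearMap.adjoint_inner_left, map_add, inner_add_right]
  ring

theorem qp_filter_dssf_inequality_general (n m₁ m₂ : ℕ)
    (h : EuclideanSpace ℝ (Fin n) → ℝ)
    (gradh : EuclideanSpace ℝ (Fin n) → EuclideanSpace ℝ (Fin n))
    (f : EuclideanSpace ℝ (Fin n) → EuclideanSpace ℝ (Fin n))
    (g₁ : EuclideanSpace ℝ (Fin n) →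
      (EuclideanSpace ℝ (Fin m₁) →L[ℝ] EuclideanSpace ℝ (Fin n)))
    (g₂ : EuclideanSpace ℝ (Fin n) →
      (EuclideanSpace ℝ (Fin m₂) →L[ℝ] EuclideanSpace ℝ (Fin n)))
    (u₀ : EuclideanSpace ℝ (Fin n) → EuclideanSpace ℝ (Fin m₂))
    (ρinv : ℝ → ℝ)
    (α : ℝ → ℝ)
    -- transposes `g₁ᵀ∇h` and `g₂ᵀ∇h`:
    (b₁ : EuclideanSpace ℝ (Fin n) → EuclideanSpace ℝ (Fin m₁))
    (hb₁ : ∀ x, b₁ x = ContinuousLinearMap.adjoint (g₁ x) (gradh x))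
    (b₂ : EuclideanSpace ℝ (Fin n) → EuclideanSpace ℝ (Fin m₂))
    (hb₂ : ∀ x, b₂ x = ContinuousLinearMap.adjoint (g₂ x) (gradh x))
    (ω : EuclideanSpace ℝ (Fin n) → ℝ)
    (hω : ∀ x, ω x = ⟪gradh x, f x + g₂ x (u₀ x)⟫
      - ‖b₁ x‖ * ρinv (max 0 (-(h x))) + α (h x))
    (hcbf : ∀ x, b₂ x = 0 → 0 ≤ ω x)
    (ubar : EuclideanSpace ℝ (Fin n) → EuclideanSpace ℝ (Fin m₂))
    (hubar : ∀ x, ubar x =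
      if 0 ≤ ω x then 0 else (-(ω x / ‖b₂ x‖^2)) • b₂ x) :
    ∀ (x : EuclideanSpace ℝ (Fin n)) (d : EuclideanSpace ℝ (Fin m₁)),
      ⟪gradh x, f x + g₁ x d + g₂ x (u₀ x + ubar x)⟫ ≥
        -α (h x) + ‖b₁ x‖ * (ρinv (max 0 (-(h x))) - ‖d‖) := by
  intro x d
  have hubar_eq : ubar x = qpFilter (ω x) (b₂ x) := hubar x
  have hdist : -(‖b₁ x‖ * ‖d‖) ≤ ⟪b₁ x, d⟫ := neg_le_of_abs_le (abs_real_inner_le_norm _ _)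
  have hfilter := add_inner_qpFilter (hcbf x)
  rw [inner_add_apply_add_apply, ← hb₁, ← hb₂, hubar_eq]
  linarith [hω x, le_max_right (ω x) 0]

/-- DSSf differential inequality for the QP filter: with
`ω(x) = ⟨∇h, f + g₂u₀⟩ − ‖g₁ᵀ∇h‖·ρ⁻¹(max{0,−h}) + α(h)` and the DSSf-CBF condition
`g₂ᵀ∇h = 0 ⟹ ω ≥ 0`, the QP filter `ū = 0` if `ω ≥ 0`, `ū = −(ω/‖g₂ᵀ∇h‖²)·g₂ᵀ∇h`
otherwise, yields for all `x, d`: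
`⟨∇h, f + g₁d + g₂(u₀+ū)⟩ ≥ −α(h) + ‖g₁ᵀ∇h‖·(ρ⁻¹(max{0,−h}) − ‖d‖)`. -/
theorem qp_filter_dssf_inequality (n m₁ m₂ : ℕ)
    (h : EuclideanSpace ℝ (Fin n) → ℝ)
    (gradh : EuclideanSpace ℝ (Fin n) → EuclideanSpace ℝ (Fin n))
    (hgrad : ∀ x, HasGradientAt h (gradh x) x)
    (f : EuclideanSpace ℝ (Fin n) → EuclideanSpace ℝ (Fin n))
    (g₁ : EuclideanSpace ℝ (Fin n) →
      (EuclideanSpace ℝ (Fin m₁) →L[ℝ] EuclideanSpace ℝ (Fin n)))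
    (g₂ : EuclideanSpace ℝ (Fin n) →
      (EuclideanSpace ℝ (Fin m₂) →L[ℝ] EuclideanSpace ℝ (Fin n)))
    (u₀ : EuclideanSpace ℝ (Fin n) → EuclideanSpace ℝ (Fin m₂))
    (ρ ρinv : ℝ → ℝ) (hρ0 : ρ 0 = 0) (hρmono : StrictMonoOn ρ (Ici 0))
    (hρcont : ContinuousOn ρ (Ici 0))
    (hρinv_nonneg : ∀ r ≥ (0:ℝ), 0 ≤ ρinv r)
    (hρinv : ∀ r ≥ (0:ℝ), ρ (ρinv r) = r)
    (α : ℝ → ℝ) (hα0 : α 0 = 0) (hαmono : StrictMono α)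
    -- transposes `g₁ᵀ∇h` and `g₂ᵀ∇h`:
    (b₁ : EuclideanSpace ℝ (Fin n) → EuclideanSpace ℝ (Fin m₁))
    (hb₁ : ∀ x, b₁ x = ContinuousLinearMap.adjoint (g₁ x) (gradh x))
    (b₂ : EuclideanSpace ℝ (Fin n) → EuclideanSpace ℝ (Fin m₂))
    (hb₂ : ∀ x, b₂ x = ContinuousLinearMap.adjoint (g₂ x) (gradh x))
    (ω : EuclideanSpace ℝ (Fin n) → ℝ)
    (hω : ∀ x, ω x = ⟪gradh x, f x + g₂ x (u₀ x)⟫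
      - ‖b₁ x‖ * ρinv (max 0 (-(h x))) + α (h x))
    (hcbf : ∀ x, b₂ x = 0 → 0 ≤ ω x)
    (ubar : EuclideanSpace ℝ (Fin n) → EuclideanSpace ℝ (Fin m₂))
    (hubar : ∀ x, ubar x =
      if 0 ≤ ω x then 0 else (-(ω x / ‖b₂ x‖^2)) • b₂ x) :
    ∀ (x : EuclideanSpace ℝ (Fin n)) (d : EuclideanSpace ℝ (Fin m₁)),
      ⟪gradh x, f x + g₁ x d + g₂ x (u₀ x + ubar x)⟫ ≥
        -α (h x) + ‖b₁ x‖ * (ρinv (max 0 (-(h x))) - ‖d‖) :=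
  qp_filter_dssf_inequality_general n m₁ m₂ h gradh f g₁ g₂ u₀ ρinv α b₁ hb₁ b₂ hb₂ ω hω hcbf ubar
    hubar
end

section
/- (Non-overshooting sandwich, disturbance-free pointwise version) Let h : ℝⁿ → ℝ be C¹, f, g locally Lipschitz, u₀ : ℝⁿ → ℝᵐ, and α₀ ≤ α extended class K functions such that ω₀(x) := ⟨∇h, f + g u₀⟩ + α₀(h(x)) ≤ 0 for all x, and ⟨∇h, g(x)⟩ = 0 ⟹ ω(x) := ⟨∇h, f + g u₀⟩ + α(h(x)) ≥ 0. Define u(x) = u₀(x) + (gᵀ∇h/‖gᵀ∇h‖²)·max{0, −ω(x)} (interpreted as u₀ when gᵀ∇h = 0). Then for every x ∈ ℝⁿ: −α(h(x)) ≤ ⟨∇h(x), f(x) + g(x)u(x)⟩ ≤ −α₀(h(x)). -/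
open Set
open scoped RealInnerProductSpace

/-!
Along `f + g u₀` the derivative of `h` is `L = ω - α(h)`. The correction term of `u` adds
exactly `max{0, -ω}` to it: when `gᵀ∇h ≠ 0` because `⟪∇h, g (gᵀ∇h)⟫ = ‖gᵀ∇h‖²`, and when
`gᵀ∇h = 0` because then `ω ≥ 0`. So the closed-loop derivative is `max{L, -α(h)}`, which lies
in `[-α(h), -α₀(h)]` since `L = ω₀ - α₀(h) ≤ -α₀(h)` and `α₀ ≤ α`.
-/

theorem add_max_zero_neg_add_eq_max (L A : ℝ) : L + max 0 (-(L + A)) = max L (-A) := by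
  rw [← max_add_add_left, add_zero]
  ring_nf

theorem max_mem_Icc_of_add_nonpos {L A₀ A : ℝ} (hA : A₀ ≤ A) (hL : L + A₀ ≤ 0) :
    max L (-A) ∈ Icc (-A) (-A₀) :=
  ⟨le_max_right _ _, max_le (by linarith) (neg_le_neg hA)⟩

theorem ContinuousLinearMap.inner_apply_adjoint_self {E F : Type*}
    [NormedAddCommGroup E] [InnerProductSpace ℝ E] [CompleteSpace E]
    [NormedAddCommGroup F] [InnerProductSpace ℝ F] [CompleteSpace F]
    (G : E →L[ℝ] F) (p : F) : ⟪p, G (adjoint G p)⟫ = ‖adjoint G p‖ ^ 2 := by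
  rw [← ContinuousLinearMap.adjoint_inner_left, real_inner_self_eq_norm_sq]

theorem ContinuousLinearMap.inner_apply_div_norm_sq_smul_adjoint {E F : Type*}
    [NormedAddCommGroup E] [InnerProductSpace ℝ E] [CompleteSpace E]
    [NormedAddCommGroup F] [InnerProductSpace ℝ F] [CompleteSpace F]
    (G : E →L[ℝ] F) {p : F} (hp : adjoint G p ≠ 0) (t : ℝ) :
    ⟪p, G ((t / ‖adjoint G p‖ ^ 2) • adjoint G p)⟫ = t := by
  have hnorm : ‖adjoint G p‖ ^ 2 ≠ 0 := pow_ne_zero 2 (norm_ne_zero_iff.mpr hp)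
  rw [map_smul, inner_smul_right, G.inner_apply_adjoint_self, div_mul_cancel₀ t hnorm]

theorem non_overshooting_sandwich_general (n m : ℕ)
    (h : EuclideanSpace ℝ (Fin n) → ℝ)
    (gradh : EuclideanSpace ℝ (Fin n) → EuclideanSpace ℝ (Fin n))
    (f : EuclideanSpace ℝ (Fin n) → EuclideanSpace ℝ (Fin n))
    (g : EuclideanSpace ℝ (Fin n) →
      (EuclideanSpace ℝ (Fin m) →L[ℝ] EuclideanSpace ℝ (Fin n)))
    (u₀ : EuclideanSpace ℝ (Fin n) → EuclideanSpace ℝ (Fin m))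
    (α₀ α : ℝ → ℝ)
    (hle : ∀ r, α₀ r ≤ α r)
    (b : EuclideanSpace ℝ (Fin n) → EuclideanSpace ℝ (Fin m))
    (hb : ∀ x, b x = ContinuousLinearMap.adjoint (g x) (gradh x))
    (ω₀ ω : EuclideanSpace ℝ (Fin n) → ℝ)
    (hω₀ : ∀ x, ω₀ x = ⟪gradh x, f x + g x (u₀ x)⟫ + α₀ (h x))
    (hω : ∀ x, ω x = ⟪gradh x, f x + g x (u₀ x)⟫ + α (h x))
    (hω₀le : ∀ x, ω₀ x ≤ 0)
    (hcbf : ∀ x, b x = 0 → 0 ≤ ω x)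
    (u : EuclideanSpace ℝ (Fin n) → EuclideanSpace ℝ (Fin m))
    -- when `b x = 0` the scalar factor is `max{0,−ω}/0 = 0`, so `u x = u₀ x`:
    (hu : ∀ x, u x = u₀ x + (max 0 (-(ω x)) / ‖b x‖^2) • b x) :
    ∀ x : EuclideanSpace ℝ (Fin n),
      -α (h x) ≤ ⟪gradh x, f x + g x (u x)⟫ ∧
        ⟪gradh x, f x + g x (u x)⟫ ≤ -α₀ (h x) := by
  intro x
  set L := ⟪gradh x, f x + g x (u₀ x)⟫
  have hcorrection :
      ⟪gradh x, g x ((max 0 (-(ω x)) / ‖b x‖ ^ 2) • b x)⟫ = max 0 (-(ω x)) := by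
    by_cases hbx : b x = 0
    · simp [hbx, hcbf x hbx]
    · rw [hb x] at hbx ⊢
      exact (g x).inner_apply_div_norm_sq_smul_adjoint hbx _
  have hclosed : ⟪gradh x, f x + g x (u x)⟫ = max L (-α (h x)) := by
    rw [hu x, map_add, ← add_assoc, inner_add_right, hcorrection, hω x,
      add_max_zero_neg_add_eq_max]
  rw [hclosed]
  exact max_mem_Icc_of_add_nonpos (hle (h x)) (hω₀ x ▸ hω₀le x)

/-- Non-overshooting sandwich, disturbance-free pointwise version:
with `ω₀(x) = ⟨∇h, f + g u₀⟩ + α₀(h(x)) ≤ 0` everywhere and the CBF condition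
`gᵀ∇h = 0 ⟹ ω(x) = ⟨∇h, f + g u₀⟩ + α(h(x)) ≥ 0` (where `α₀ ≤ α` are extended
class K), the QP feedback `u = u₀ + (gᵀ∇h/‖gᵀ∇h‖²)·max{0, −ω}` yields, for all `x`,
`−α(h(x)) ≤ ⟨∇h, f + g u⟩ ≤ −α₀(h(x))`. -/
theorem non_overshooting_sandwich (n m : ℕ)
    (h : EuclideanSpace ℝ (Fin n) → ℝ)
    (gradh : EuclideanSpace ℝ (Fin n) → EuclideanSpace ℝ (Fin n))
    (hgrad : ∀ x, HasGradientAt h (gradh x) x)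
    (f : EuclideanSpace ℝ (Fin n) → EuclideanSpace ℝ (Fin n))
    (g : EuclideanSpace ℝ (Fin n) →
      (EuclideanSpace ℝ (Fin m) →L[ℝ] EuclideanSpace ℝ (Fin n)))
    (u₀ : EuclideanSpace ℝ (Fin n) → EuclideanSpace ℝ (Fin m))
    (α₀ α : ℝ → ℝ) (hα₀0 : α₀ 0 = 0) (hα0 : α 0 = 0)
    (hα₀mono : StrictMono α₀) (hαmono : StrictMono α)
    (hle : ∀ r, α₀ r ≤ α r)
    (b : EuclideanSpace ℝ (Fin n) → EuclideanSpace ℝ (Fin m))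
    (hb : ∀ x, b x = ContinuousLinearMap.adjoint (g x) (gradh x))
    (ω₀ ω : EuclideanSpace ℝ (Fin n) → ℝ)
    (hω₀ : ∀ x, ω₀ x = ⟪gradh x, f x + g x (u₀ x)⟫ + α₀ (h x))
    (hω : ∀ x, ω x = ⟪gradh x, f x + g x (u₀ x)⟫ + α (h x))
    (hω₀le : ∀ x, ω₀ x ≤ 0)
    (hcbf : ∀ x, b x = 0 → 0 ≤ ω x)
    (u : EuclideanSpace ℝ (Fin n) → EuclideanSpace ℝ (Fin m))
    -- when `b x = 0` the scalar factor is `max{0,−ω}/0 = 0`, so `u x = u₀ x`: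
    (hu : ∀ x, u x = u₀ x + (max 0 (-(ω x)) / ‖b x‖^2) • b x) :
    ∀ x : EuclideanSpace ℝ (Fin n),
      -α (h x) ≤ ⟪gradh x, f x + g x (u x)⟫ ∧
        ⟪gradh x, f x + g x (u x)⟫ ≤ -α₀ (h x) :=
  non_overshooting_sandwich_general n m h gradh f g u₀ α₀ α hle b hb ω₀ ω hω₀ hω hω₀le hcbf u hu
end
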